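/- arXiv:2004.08461 — 2 statements merged into one kernel-verified Lean document; each statement's English description precedes it below -/
import Mathlib

section
/- The sign function sgn on the coordinate ring A = F_q[t,y] of an elliptic curve, defined by sending a nonzero element a = Σ a_i t^i + Σ b_i t^i y to the coefficient of its term of highest degree (where deg t = 2 and deg y = 3), is multiplicative: sgn(ab) = sgn(a)·sgn(b) for all nonzero a, b ∈ A. -/
open Polynomial
open scoped Classical

/-- The sign (leading coefficient for the grading `deg t = 2`, `deg y = 3`) of the
element `f(t) + g(t)·y` of the coordinate ring `A = F_q[t,y]`, written in the canonical
form with `f, g ∈ F_q[t]`. -/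

noncomputable def ecSgn {F : Type*} [Field F] (f g : F[X]) : F :=
  if g = 0 then f.leadingCoeff
  else if 3 + 2 * g.natDegree < 2 * f.natDegree then f.leadingCoeff else g.leadingCoeff

/-!
Substituting `t ↦ X²`, `y ↦ X³` sends `f(t) + g(t)·y` to `f(X²) + X³·g(X²) ∈ F[X]`, whose even
and odd parts never share a degree, so its leading coefficient is the sign. The substitution is
multiplicative up to the terms of the Weierstrass relation other than `y² = t³`; these have
weighted degree at most `5`, so on a product they only disturb terms strictly below the leading one.
-/

namespace EllipticSign

variable {F : Type*} [Field F]

noncomputable def weightedPoly (f g : F[X]) : F[X] :=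
  expand F 2 f + X ^ 3 * expand F 2 g

lemma natDegree_X_pow_three_mul_expand {g : F[X]} (hg : g ≠ 0) :
    (X ^ 3 * expand F 2 g).natDegree = 3 + 2 * g.natDegree := by
  rw [natDegree_X_pow_mul (n := 3) ((expand_ne_zero two_pos).mpr hg), natDegree_expand]
  ring

lemma leadingCoeff_X_pow_three_mul_expand (g : F[X]) :
    (X ^ 3 * expand F 2 g).leadingCoeff = g.leadingCoeff := by
  rw [leadingCoeff_mul, leadingCoeff_X_pow, leadingCoeff_expand two_pos, one_mul]

lemma ecSgn_eq_leadingCoeff_weightedPoly (f g : F[X]) :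
    ecSgn f g = (weightedPoly f g).leadingCoeff := by
  rcases eq_or_ne g 0 with rfl | hg
  · simp [ecSgn, weightedPoly, leadingCoeff_expand two_pos]
  have hodd := natDegree_X_pow_three_mul_expand (F := F) hg
  have heven := natDegree_expand 2 f
  rw [ecSgn, if_neg hg, weightedPoly]
  split_ifs with hlt
  · rw [leadingCoeff_add_of_degree_lt' (degree_lt_degree (by omega)),
      leadingCoeff_expand two_pos]
  · rw [leadingCoeff_add_of_degree_lt (degree_lt_degree (by omega)),
      leadingCoeff_X_pow_three_mul_expand]

lemma le_natDegree_weightedPoly (f : F[X]) {g : F[X]} (hg : g ≠ 0) :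
    3 + 2 * g.natDegree ≤ (weightedPoly f g).natDegree := by
  have hodd := natDegree_X_pow_three_mul_expand (F := F) hg
  have heven := natDegree_expand 2 f
  rw [weightedPoly]
  rcases lt_or_gt_of_ne (show 2 * f.natDegree ≠ 3 + 2 * g.natDegree by omega) with hlt | hlt
  · rw [natDegree_add_eq_right_of_natDegree_lt (by omega), hodd]
  · rw [natDegree_add_eq_left_of_natDegree_lt (by omega)]
    omega

noncomputable def weierstrassTail (c₁ c₂ c₃ c₄ c₆ : F) : F[X] :=
  C c₂ * X ^ 4 + C c₄ * X ^ 2 + C c₆ - C c₁ * X ^ 5 - C c₃ * X ^ 3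

lemma natDegree_weierstrassTail_le (c₁ c₂ c₃ c₄ c₆ : F) :
    (weierstrassTail c₁ c₂ c₃ c₄ c₆).natDegree ≤ 5 := by
  unfold weierstrassTail
  compute_degree

lemma weightedPoly_mul (c₁ c₂ c₃ c₄ c₆ : F) (f g f' g' : F[X]) :
    weightedPoly (f * f' + g * g' * (X ^ 3 + C c₂ * X ^ 2 + C c₄ * X + C c₆))
        (f * g' + g * f' - g * g' * (C c₁ * X + C c₃)) =
      weightedPoly f g * weightedPoly f' g' +
        expand F 2 (g * g') * weierstrassTail c₁ c₂ c₃ c₄ c₆ := by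
  simp only [weightedPoly, weierstrassTail, map_add, map_sub, map_mul, map_pow, expand_X,
    expand_C]
  ring

lemma natDegree_expand_mul_weierstrassTail_lt {c₁ c₂ c₃ c₄ c₆ : F} {f g f' g' : F[X]}
    (hg : g ≠ 0) (hg' : g' ≠ 0) :
    (expand F 2 (g * g') * weierstrassTail c₁ c₂ c₃ c₄ c₆).natDegree <
      (weightedPoly f g * weightedPoly f' g').natDegree := by
  have hφ := le_natDegree_weightedPoly f hg
  have hφ' := le_natDegree_weightedPoly f' hg'
  calc (expand F 2 (g * g') * weierstrassTail c₁ c₂ c₃ c₄ c₆).natDegree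
      ≤ (g * g').natDegree * 2 + 5 := by
        grw [natDegree_mul_le, natDegree_expand, natDegree_weierstrassTail_le]
    _ < (3 + 2 * g.natDegree) + (3 + 2 * g'.natDegree) := by
        rw [natDegree_mul hg hg']
        omega
    _ ≤ (weightedPoly f g * weightedPoly f' g').natDegree := by
        rw [natDegree_mul (ne_zero_of_natDegree_gt (by omega : 0 < _))
          (ne_zero_of_natDegree_gt (by omega : 0 < _))]
        omega

end EllipticSign

open EllipticSign in
theorem stmt_2_general {F : Type*} [Field F] (c₁ c₂ c₃ c₄ c₆ : F)
    (f g f' g' : F[X]) :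
    ecSgn (f * f' + g * g' * (X ^ 3 + C c₂ * X ^ 2 + C c₄ * X + C c₆))
        (f * g' + g * f' - g * g' * (C c₁ * X + C c₃)) =
      ecSgn f g * ecSgn f' g' := by
  simp only [ecSgn_eq_leadingCoeff_weightedPoly, weightedPoly_mul, ← leadingCoeff_mul]
  rcases eq_or_ne g 0 with rfl | hg
  · simp
  rcases eq_or_ne g' 0 with rfl | hg'
  · simp
  exact leadingCoeff_add_of_degree_lt'
    (degree_lt_degree (natDegree_expand_mul_weierstrassTail_lt hg hg'))

/-- the sign function on the coordinate ring `A = F_q[t,y]` of the elliptic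
curve `y² + c₁ty + c₃y = t³ + c₂t² + c₄t + c₆` is multiplicative.  Elements of `A` are
represented as pairs `(f,g)` standing for `f(t) + g(t)·y`; the product of `(f,g)` and
`(f',g')` is `(f·f' + g·g'·(X³+c₂X²+c₄X+c₆), f·g' + g·f' - g·g'·(c₁X + c₃))`, using the
Weierstrass relation to rewrite `y²`. -/
theorem stmt_2 {F : Type*} [Field F] [Fintype F] (c₁ c₂ c₃ c₄ c₆ : F)
    (f g f' g' : F[X]) (hfg : ¬(f = 0 ∧ g = 0)) (hfg' : ¬(f' = 0 ∧ g' = 0)) :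
    ecSgn (f * f' + g * g' * (X ^ 3 + C c₂ * X ^ 2 + C c₄ * X + C c₆))
        (f * g' + g * f' - g * g' * (C c₁ * X + C c₃)) =
      ecSgn f g * ecSgn f' g' :=
  stmt_2_general c₁ c₂ c₃ c₄ c₆ f g f' g'
end

section
/- Dual basis pairing for f_v: in the setting of the dual A-motive with σ-basis relations (h_{i+1}, h_{i+2})^⊤ = φ_i (h_i, h_{i+1})^⊤ where φ_i = [[0,1],[t-θ,b_i]], and with V = [[a_n,1],[1,0]], X = diag(t-θ, 1), satisfying Θ_n^⊤V = X and Θ_{n-i}^⊤X = Xφ_i for 1 ≤ i ≤ n-1, one has the identity (h_1, h_2)·V^⊤·f_v = v_1 h_n + v_2 h_{n-1} + ⋯ + v_n h_1. -/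
/-!
Moving the matrices across the pairing turns the `i`-th summand into
`((Θ_n ⋯ Θ_{i+1})ᵀ V (h_1, h_2)ᵀ) · (0, v_i)ᵀ`. The identities `Θ_nᵀ V = X` and
`Θ_{n-k}ᵀ X = X φ_k`, together with the recursion `(h_{k+1}, h_{k+2})ᵀ = φ_k (h_k, h_{k+1})ᵀ`,
give by induction `(Θ_n ⋯ Θ_{n-k+1})ᵀ V (h_1, h_2)ᵀ = X (h_k, h_{k+1})ᵀ`, whose second
coordinate is `h_{k+1}`.
-/

open Matrix

namespace Matrix

variable {R ι : Type*} [CommSemiring R] [Fintype ι]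

theorem dotProduct_transpose_mulVec_mulVec (w u : ι → R) (A P : Matrix ι ι R) :
    w ⬝ᵥ (Aᵀ *ᵥ (P *ᵥ u)) = (Pᵀ *ᵥ (A *ᵥ w)) ⬝ᵥ u := by
  rw [dotProduct_mulVec, vecMul_transpose, dotProduct_mulVec, mulVec_transpose]

theorem transpose_prod_range_mulVec_eq [DecidableEq ι] (T φ : ℕ → Matrix ι ι R)
    (X : Matrix ι ι R) (H : ℕ → ι → R) (w : ι → R) (m : ℕ)
    (hbase : (T 0)ᵀ *ᵥ w = X *ᵥ H 1)
    (hT : ∀ k, 1 ≤ k → k < m → (T k)ᵀ * X = X * φ k)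
    (hH : ∀ k, 1 ≤ k → k < m → H (k + 1) = φ k *ᵥ H k) :
    ∀ k, 1 ≤ k → k ≤ m → ((List.range k).map T).prodᵀ *ᵥ w = X *ᵥ H k := by
  intro k hk1 hkm
  induction k, hk1 using Nat.le_induction with
  | base => simpa using hbase
  | succ k hk1 ih =>
    rw [List.range_succ, List.map_append, List.prod_append, List.map_singleton,
      List.prod_singleton, transpose_mul, ← mulVec_mulVec, ih (by omega), mulVec_mulVec,
      hT k hk1 (by omega), ← mulVec_mulVec, hH k hk1 (by omega)]

end Matrix

theorem stmt_16_general {R : Type*} [CommRing R] (n : ℕ)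
    (x : R) (a b v h : ℕ → R) :
    let φ : ℕ → Matrix (Fin 2) (Fin 2) R := fun i => !![0, 1; x, -(b i)]
    let Θ : ℕ → Matrix (Fin 2) (Fin 2) R := fun i => !![0, 1; x, -(a i)]
    let V : Matrix (Fin 2) (Fin 2) R := !![a n, 1; 1, 0]
    let Xm : Matrix (Fin 2) (Fin 2) R := !![x, 0; 0, 1]
    let fv : Fin 2 → R := ∑ i ∈ Finset.Icc 1 n,
      ((((List.range (n - i)).map fun j => Θ (n - j)).prod).mulVec ![(0 : R), v i])
    ∀ (hrec : ∀ i, 1 ≤ i → i ≤ n →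
        ![h (i + 1), h (i + 2)] = (φ i).mulVec ![h i, h (i + 1)])
      (hX1 : (Θ n).transpose * V = Xm)
      (hX2 : ∀ i, 1 ≤ i → i ≤ n - 1 → (Θ (n - i)).transpose * Xm = Xm * φ i),
      dotProduct ![h 1, h 2] (V.transpose.mulVec fv) =
        ∑ i ∈ Finset.Icc 1 n, v i * h (n + 1 - i) := by
  intro φ Θ V Xm fv hrec hX1 hX2
  have hpartial : ∀ k, 1 ≤ k → k ≤ n - 1 →
      ((List.range k).map fun j => Θ (n - j)).prodᵀ *ᵥ (V *ᵥ ![h 1, h 2]) =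
        Xm *ᵥ ![h k, h (k + 1)] :=
    transpose_prod_range_mulVec_eq _ φ Xm (fun k => ![h k, h (k + 1)]) _ (n - 1)
      (by rw [mulVec_mulVec, Nat.sub_zero, hX1])
      (fun k hk1 hk => hX2 k hk1 hk.le) (fun k hk1 hk => hrec k hk1 (by omega))
  rw [mulVec_sum, dotProduct_sum]
  refine Finset.sum_congr rfl fun i hi => ?_
  rw [dotProduct_transpose_mulVec_mulVec]
  obtain ⟨hi1, hin⟩ := Finset.mem_Icc.1 hi
  rcases hin.lt_or_eq with hin | rfl
  · rw [hpartial (n - i) (by omega) (by omega), show n - i + 1 = n + 1 - i by omega]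
    simp [Xm, dotProduct, Fin.sum_univ_two, mul_comm]
  · simp [V, dotProduct, Fin.sum_univ_two, mul_comm]

/-- dual basis pairing for `f_v`.  With `x` in the role of `t-θ`,
`φ_i = [[0,1],[x,-b_i]]`, `Θ_i = [[0,1],[x,-a_i]]`, `a_i = b_{n-i}` for
`1 ≤ i ≤ n-1`, `V = [[a_n,1],[1,0]]`, `X = diag(x,1)`, the basis relations
`(h_{i+1}, h_{i+2})ᵀ = φ_i (h_i, h_{i+1})ᵀ`, the matrix identities `Θ_nᵀ V = X` and
`Θ_{n-i}ᵀ X = X φ_i`, and `f_v = Σ_{i=1}^n Θ_n⋯Θ_{i+1}(0,v_i)ᵀ`, one has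
`(h_1, h_2)·Vᵀ·f_v = Σ_{i=1}^n v_i h_{n+1-i}`. -/
theorem stmt_16 {R : Type*} [CommRing R] (n : ℕ) (hn : 1 ≤ n)
    (x : R) (a b v h : ℕ → R)
    (hab : ∀ i, 1 ≤ i → i ≤ n - 1 → a i = b (n - i)) :
    let φ : ℕ → Matrix (Fin 2) (Fin 2) R := fun i => !![0, 1; x, -(b i)]
    let Θ : ℕ → Matrix (Fin 2) (Fin 2) R := fun i => !![0, 1; x, -(a i)]
    let V : Matrix (Fin 2) (Fin 2) R := !![a n, 1; 1, 0]
    let Xm : Matrix (Fin 2) (Fin 2) R := !![x, 0; 0, 1]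
    let fv : Fin 2 → R := ∑ i ∈ Finset.Icc 1 n,
      ((((List.range (n - i)).map fun j => Θ (n - j)).prod).mulVec ![(0 : R), v i])
    ∀ (hrec : ∀ i, 1 ≤ i → i ≤ n →
        ![h (i + 1), h (i + 2)] = (φ i).mulVec ![h i, h (i + 1)])
      (hX1 : (Θ n).transpose * V = Xm)
      (hX2 : ∀ i, 1 ≤ i → i ≤ n - 1 → (Θ (n - i)).transpose * Xm = Xm * φ i),
      dotProduct ![h 1, h 2] (V.transpose.mulVec fv) =
        ∑ i ∈ Finset.Icc 1 n, v i * h (n + 1 - i) :=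
  stmt_16_general n x a b v h
end
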